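/- With P_max defined as the chain-infimum of δ̂, P_max satisfies data processing: for every CPTP map E and all density operators ρ, σ, P_max(E[ρ], E[σ]) ≤ P_max(ρ,σ). -/

import Mathlib

open Matrix BigOperators ComplexOrder

variable {n : Type*} [Fintype n] [DecidableEq n]

/-- Trace norm (Schatten 1-norm) of a matrix. -/
noncomputable def traceNorm (A : Matrix n n ℂ) : ℝ :=
  (((Matrix.posSemidef_conjTranspose_mul_self A).1.eigenvectorUnitary : Matrix n n ℂ) *
    diagonal (((↑) : ℝ → ℂ) ∘ Real.sqrt ∘ (Matrix.posSemidef_conjTranspose_mul_self A).1.eigenvalues) *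
    (star (Matrix.posSemidef_conjTranspose_mul_self A).1.eigenvectorUnitary : Matrix n n ℂ)).trace.re

/-- A density operator: positive semidefinite with trace 1. -/
def IsDensity (ρ : Matrix n n ℂ) : Prop := ρ.PosSemidef ∧ ρ.trace = 1

/-- δ̃(ρ,σ): smallest mixing weight ε with ρ = (1-ε)σ + εσ'. -/
noncomputable def deltaTilde (ρ σ : Matrix n n ℂ) : ℝ :=
  sInf {ε : ℝ | ε ∈ Set.Icc (0:ℝ) 1 ∧
    ∃ σ' : Matrix n n ℂ, IsDensity σ' ∧ ρ = (1 - ε) • σ + ε • σ'}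

/-- δ̂ = min of δ̃ in both orders. -/
noncomputable def deltaHat (ρ σ : Matrix n n ℂ) : ℝ :=
  min (deltaTilde ρ σ) (deltaTilde σ ρ)

/-- P_max: infimum over finite chains of density operators from ρ to σ of the
sum of δ̂ over consecutive pairs. -/
noncomputable def Pmax (ρ σ : Matrix n n ℂ) : ℝ :=
  sInf {s : ℝ | ∃ (m : ℕ) (ω : Fin (m + 1) → Matrix n n ℂ),
    ω 0 = ρ ∧ ω (Fin.last m) = σ ∧ (∀ i, IsDensity (ω i)) ∧
    s = ∑ i : Fin m, deltaHat (ω i.castSucc) (ω i.succ)}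

/-- Choi matrix of a linear map on matrices. -/
noncomputable def choi {m : Type*} [Fintype m] [DecidableEq m]
    (E : Matrix n n ℂ →ₗ[ℂ] Matrix m m ℂ) : Matrix (n × m) (n × m) ℂ :=
  fun p q => E (Matrix.single p.1 q.1 1) p.2 q.2

/-- Completely positive trace-preserving map: Choi matrix PSD (Choi's theorem)
and trace preservation. -/
def IsCPTP {m : Type*} [Fintype m] [DecidableEq m]
    (E : Matrix n n ℂ →ₗ[ℂ] Matrix m m ℂ) : Prop :=
  (choi E).PosSemidef ∧ ∀ A : Matrix n n ℂ, (E A).trace = A.trace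

/-! A linear map sending density operators to density operators maps every decomposition
ρ = (1 - ε) σ + ε σ' to the decomposition E ρ = (1 - ε) E σ + ε E σ', so it can only decrease δ̃
and δ̂; applied pointwise it turns each chain from ρ to σ into a chain from E ρ to E σ of no larger
cost. A CPTP map sends density operators to density operators because every positive semidefinite
matrix is a sum of rank-one ones v v*, and E (v v*) = K* C K for the Choi matrix C of E. -/

section Channel

variable {m : Type*} [Fintype m] [DecidableEq m]

lemma map_apply_eq_sum_choi (E : Matrix n n ℂ →ₗ[ℂ] Matrix m m ℂ) (A : Matrix n n ℂ) (i j : m) :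
    E A i j = ∑ p, ∑ q, A p q * choi E (p, i) (q, j) := by
  conv_lhs => rw [matrix_eq_sum_single A]
  simp only [map_sum, Matrix.sum_apply]
  refine Finset.sum_congr rfl fun p _ => Finset.sum_congr rfl fun q _ => ?_
  have hsingle : single p q (A p q) = A p q • single p q 1 := by
    rw [smul_single, smul_eq_mul, mul_one]
  rw [hsingle, map_smul, Matrix.smul_apply, smul_eq_mul, choi]

lemma exists_map_vecMulVec_eq_conjTranspose_mul_choi_mul (E : Matrix n n ℂ →ₗ[ℂ] Matrix m m ℂ)
    (v : n → ℂ) : ∃ K : Matrix (n × m) m ℂ, E (vecMulVec v (star v)) = Kᴴ * choi E * K := by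
  refine ⟨of fun x j => star (v x.1) * (1 : Matrix m m ℂ) x.2 j, ?_⟩
  ext i j
  simp only [map_apply_eq_sum_choi, vecMulVec_apply, mul_apply, conjTranspose_apply, of_apply,
    one_apply, mul_one, mul_zero, apply_ite, star_zero, RCLike.star_def, RingHomCompTriple.comp_apply,
    RingHom.id_apply, ite_mul, zero_mul, Fintype.sum_prod_type, Finset.sum_ite_eq', Finset.mem_univ,
    ↓reduceIte, Finset.sum_mul, Pi.star_apply]
  rw [Finset.sum_comm]
  refine Finset.sum_congr rfl fun p _ => Finset.sum_congr rfl fun q _ => ?_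
  ring

lemma posSemidef_map_of_posSemidef_choi {E : Matrix n n ℂ →ₗ[ℂ] Matrix m m ℂ}
    (hE : (choi E).PosSemidef) {A : Matrix n n ℂ} (hA : A.PosSemidef) : (E A).PosSemidef := by
  obtain ⟨k, v, rfl⟩ := posSemidef_iff_eq_sum_vecMulVec.mp hA
  rw [map_sum]
  refine posSemidef_sum _ fun i _ => ?_
  obtain ⟨K, hK⟩ := exists_map_vecMulVec_eq_conjTranspose_mul_choi_mul E (v i)
  exact hK ▸ hE.conjTranspose_mul_mul_same K

lemma IsCPTP.isDensity_map {E : Matrix n n ℂ →ₗ[ℂ] Matrix m m ℂ} (hE : IsCPTP E)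
    {ρ : Matrix n n ℂ} (hρ : IsDensity ρ) : IsDensity (E ρ) :=
  ⟨posSemidef_map_of_posSemidef_choi hE.1 hρ.1, (hE.2 ρ).trans hρ.2⟩

end Channel

section DataProcessing

omit [DecidableEq n]

lemma deltaTilde_nonneg (ρ σ : Matrix n n ℂ) : 0 ≤ deltaTilde ρ σ :=
  Real.sInf_nonneg fun _ hε => hε.1.1

lemma deltaHat_nonneg (ρ σ : Matrix n n ℂ) : 0 ≤ deltaHat ρ σ :=
  le_min (deltaTilde_nonneg ρ σ) (deltaTilde_nonneg σ ρ)

variable {m : Type*} [Fintype m] {E : Matrix n n ℂ →ₗ[ℂ] Matrix m m ℂ}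

lemma deltaTilde_map_le (hE : ∀ τ, IsDensity τ → IsDensity (E τ)) {ρ : Matrix n n ℂ}
    (hρ : IsDensity ρ) (σ : Matrix n n ℂ) : deltaTilde (E ρ) (E σ) ≤ deltaTilde ρ σ := by
  refine csInf_le_csInf ⟨0, fun _ hε => hε.1.1⟩ ⟨1, ⟨zero_le_one, le_rfl⟩, ρ, hρ, by simp⟩ ?_
  rintro ε ⟨hε, σ', hσ', rfl⟩
  exact ⟨hε, E σ', hE σ' hσ', by simp only [map_add, LinearMap.map_smul_of_tower]⟩

lemma deltaHat_map_le (hE : ∀ τ, IsDensity τ → IsDensity (E τ)) {ρ σ : Matrix n n ℂ}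
    (hρ : IsDensity ρ) (hσ : IsDensity σ) : deltaHat (E ρ) (E σ) ≤ deltaHat ρ σ :=
  min_le_min (deltaTilde_map_le hE hρ σ) (deltaTilde_map_le hE hσ ρ)

lemma Pmax_le_sum_deltaHat {k : ℕ} {ω : Fin (k + 1) → Matrix n n ℂ} (hω : ∀ i, IsDensity (ω i)) :
    Pmax (ω 0) (ω (Fin.last k)) ≤ ∑ i : Fin k, deltaHat (ω i.castSucc) (ω i.succ) := by
  refine csInf_le ⟨0, ?_⟩ ⟨k, ω, rfl, rfl, hω, rfl⟩
  rintro s ⟨_, _, _, _, _, rfl⟩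
  exact Finset.sum_nonneg fun i _ => deltaHat_nonneg _ _

lemma le_Pmax {ρ σ : Matrix n n ℂ} (hρ : IsDensity ρ) (hσ : IsDensity σ) {c : ℝ}
    (h : ∀ (k : ℕ) (ω : Fin (k + 1) → Matrix n n ℂ), (∀ i, IsDensity (ω i)) → ω 0 = ρ →
      ω (Fin.last k) = σ → c ≤ ∑ i : Fin k, deltaHat (ω i.castSucc) (ω i.succ)) :
    c ≤ Pmax ρ σ := by
  refine le_csInf ⟨_, 1, ![ρ, σ], rfl, rfl, fun i => ?_, rfl⟩ ?_
  · fin_cases i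
    exacts [hρ, hσ]
  · rintro s ⟨k, ω, hω0, hωk, hω, rfl⟩
    exact h k ω hω hω0 hωk

lemma Pmax_map_le (hE : ∀ τ, IsDensity τ → IsDensity (E τ)) {ρ σ : Matrix n n ℂ}
    (hρ : IsDensity ρ) (hσ : IsDensity σ) : Pmax (E ρ) (E σ) ≤ Pmax ρ σ := by
  refine le_Pmax hρ hσ ?_
  rintro k ω hω rfl rfl
  calc Pmax (E (ω 0)) (E (ω (Fin.last k)))
      ≤ ∑ i : Fin k, deltaHat (E (ω i.castSucc)) (E (ω i.succ)) :=
        Pmax_le_sum_deltaHat (ω := fun i => E (ω i)) fun i => hE _ (hω i)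
    _ ≤ ∑ i : Fin k, deltaHat (ω i.castSucc) (ω i.succ) :=
        Finset.sum_le_sum fun i _ => deltaHat_map_le hE (hω _) (hω _)

end DataProcessing

theorem Pmax_data_processing {m : Type*} [Fintype m] [DecidableEq m]
    (E : Matrix n n ℂ →ₗ[ℂ] Matrix m m ℂ) (hE : IsCPTP E)
    (ρ σ : Matrix n n ℂ) (hρ : IsDensity ρ) (hσ : IsDensity σ) :
    Pmax (E ρ) (E σ) ≤ Pmax ρ σ :=
  Pmax_map_le (fun _ => hE.isDensity_map) hρ hσ
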